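/- Consider an iterative receding-horizon planning scheme producing trajectories q⁰, q¹, q², … : ℝ → X, where q⁰ is safe (q⁰(t) ∈ M for all t in its horizon [t₀, t₀+T]), and at each step i either (a) the projection succeeds and qⁱ⁺¹(t) ∈ M for all t in its horizon [t₀+(i+1)Tₛ, t₀+(i+1)Tₛ+T], or (b) the projection fails and the previously planned safe trajectory together with the invariant terminal controller is executed, keeping the state in M for all future times. Then the executed state, defined as x(t) = qⁱ(t) for t ∈ [t₀+iTₛ, t₀+(i+1)Tₛ] (until a failure, after which the backup is executed), satisfies x(t) ∈ M for all t ≥ t₀. -/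
import Mathlib


/-- Theorem 2 of SafeFlowMPC (anytime safety of the receding-horizon scheme). -/
theorem stmt_1 {X : Type*} (M : Set X) (q : ℕ → ℝ → X) (x : ℝ → X)
    (t₀ Tₛ T : ℝ) (hTs : 0 < Tₛ) (hTsT : Tₛ ≤ T)
    (fails : ℕ → Prop)
    -- safety of a planned trajectory on its horizon
    (safe : ℕ → Prop)
    (hsafe_def : ∀ i, safe i ↔
      ∀ t, t₀ + i * Tₛ ≤ t → t ≤ t₀ + i * Tₛ + T → q i t ∈ M)
    -- the initial trajectory is safe
    (hsafe0 : safe 0)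
    -- (a) if the projection at step i succeeds, the next planned trajectory is safe
    (hstep : ∀ i, ¬ fails i → safe i → safe (i + 1))
    -- as long as no failure has occurred, the executed state follows the plan
    (hexec : ∀ i t, (∀ j ≤ i, ¬ fails j) →
      t₀ + i * Tₛ ≤ t → t ≤ t₀ + (i + 1) * Tₛ → x t = q i t)
    -- (b) at the first failure, the previously planned safe trajectory together
    -- with the invariant terminal controller keeps the state in M forever
    (hbackup : ∀ i, fails i → (∀ j < i, ¬ fails j) → safe i →
      ∀ t, t₀ + i * Tₛ ≤ t → x t ∈ M) :
    ∀ t, t₀ ≤ t → x t ∈ M := by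
  classical
  -- safety of all plans before the first failure
  have hsafe : ∀ i, (∀ j < i, ¬ fails j) → safe i := by
    intro i
    induction i with
    | zero => intro _; exact hsafe0
    | succ n ih =>
      intro h
      exact hstep n (h n (Nat.lt_succ_self n)) (ih fun j hj => h j (hj.trans (Nat.lt_succ_self n)))
  intro t ht
  set s : ℝ := (t - t₀) / Tₛ with hs
  have hs0 : 0 ≤ s := div_nonneg (by linarith) hTs.le
  set j : ℕ := ⌊s⌋₊ with hj
  have hjle : (j : ℝ) ≤ s := Nat.floor_le hs0
  have hjlt : s < j + 1 := Nat.lt_floor_add_one s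
  have h1 : t₀ + j * Tₛ ≤ t := by
    have := mul_le_mul_of_nonneg_right hjle hTs.le
    rw [div_mul_cancel₀ _ hTs.ne'] at this
    linarith
  have h2 : t ≤ t₀ + (j + 1) * Tₛ := by
    have := mul_le_mul_of_nonneg_right hjlt.le hTs.le
    rw [div_mul_cancel₀ _ hTs.ne'] at this
    linarith
  by_cases hfail : ∀ k ≤ j, ¬ fails k
  · -- no failure up to step j: follow the plan
    have hx : x t = q j t := hexec j t hfail h1 h2
    rw [hx]
    exact (hsafe_def j).1 (hsafe j fun k hk => hfail k hk.le) t h1 (by linarith)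
  · -- there is a failure at some k ≤ j
    push_neg at hfail
    obtain ⟨k, hkj, hk⟩ := hfail
    have hex : ∃ m, fails m := ⟨k, hk⟩
    set i := Nat.find hex with hi
    have hif : fails i := Nat.find_spec hex
    have hmin : ∀ m < i, ¬ fails m := fun m hm => Nat.find_min hex hm
    have hik : i ≤ k := Nat.find_min' hex hk
    have hit : t₀ + i * Tₛ ≤ t := by
      have : (i : ℝ) ≤ j := by exact_mod_cast hik.trans hkj
      nlinarith
    exact hbackup i hif hmin (hsafe i hmin) t hit
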